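/- arXiv:2510.14777 — 8 statements merged into one kernel-verified Lean document; each statement's English description precedes it below -/
import Mathlib

section
/- Let F be monotone on a 3D grid and suppose q⁽¹⁾ = (a, b+1, c+1), q⁽²⁾ = (a+1, b, c+1), q⁽³⁾ = (a+1, b+1, c) are points of the grid such that q⁽ⁱ⁾ is i-upward for each i ∈ {1,2,3}. Then the point (a+1, b+1, c+1) = LUB(q⁽¹⁾, q⁽²⁾, q⁽³⁾) is an upward point of F. -/
/-- `x` lies in the 3D integer grid `[n₁] × [n₂] × [n₃]`. -/
def inGrid (n x : Fin 3 → ℤ) : Prop := ∀ i, 1 ≤ x i ∧ x i ≤ n i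

/-- `x` is `i`-upward for `F`. -/
def iUpward (F : (Fin 3 → ℤ) → (Fin 3 → ℤ)) (x : Fin 3 → ℤ) (i : Fin 3) : Prop :=
  x i < F x i ∧ ∀ j, j ≠ i → F x j ≤ x j

/-- `x` is `i`-downward for `F`. -/
def iDownward (F : (Fin 3 → ℤ) → (Fin 3 → ℤ)) (x : Fin 3 → ℤ) (i : Fin 3) : Prop :=
  F x i < x i ∧ ∀ j, j ≠ i → x j ≤ F x j

/-- If (a,b+1,c+1) is 1-upward, (a+1,b,c+1) is 2-upward and (a+1,b+1,c) is
3-upward, then (a+1,b+1,c+1) is an upward point. -/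
theorem lub_of_three_iUpward (n : Fin 3 → ℤ) (a b c : ℤ)
    (F : (Fin 3 → ℤ) → (Fin 3 → ℤ))
    (hmaps : ∀ z, inGrid n z → inGrid n (F z))
    (hmono : ∀ z w, inGrid n z → inGrid n w → z ≤ w → F z ≤ F w)
    (h1 : inGrid n ![a, b + 1, c + 1]) (h2 : inGrid n ![a + 1, b, c + 1])
    (h3 : inGrid n ![a + 1, b + 1, c])
    (hq1 : iUpward F ![a, b + 1, c + 1] 0)
    (hq2 : iUpward F ![a + 1, b, c + 1] 1)
    (hq3 : iUpward F ![a + 1, b + 1, c] 2) :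
    ![a + 1, b + 1, c + 1] ≤ F ![a + 1, b + 1, c + 1] := by
  have ha := h2 0; have hb := h1 1; have hc := h1 2
  simp at ha hb hc
  have hpg : inGrid n ![a + 1, b + 1, c + 1] := by
    intro i; fin_cases i <;> simp <;> omega
  have le1 : (![a, b + 1, c + 1] : Fin 3 → ℤ) ≤ ![a + 1, b + 1, c + 1] := by
    intro i; fin_cases i <;> simp
  have le2 : (![a + 1, b, c + 1] : Fin 3 → ℤ) ≤ ![a + 1, b + 1, c + 1] := by
    intro i; fin_cases i <;> simp
  have le3 : (![a + 1, b + 1, c] : Fin 3 → ℤ) ≤ ![a + 1, b + 1, c + 1] := by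
    intro i; fin_cases i <;> simp
  have m1 := hmono _ _ h1 hpg le1 0
  have m2 := hmono _ _ h2 hpg le2 1
  have m3 := hmono _ _ h3 hpg le3 2
  have u1 := hq1.1; have u2 := hq2.1; have u3 := hq3.1
  simp at u1 u2 u3
  intro i
  fin_cases i
  · exact le_trans (by omega : (a + 1 : ℤ) ≤ F ![a, b + 1, c + 1] 0) m1
  · exact le_trans (by omega : (b + 1 : ℤ) ≤ F ![a + 1, b, c + 1] 1) m2
  · exact le_trans (by omega : (c + 1 : ℤ) ≤ F ![a + 1, b + 1, c] 2) m3
end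

section
/- Let F be monotone on a 3D grid, let x be 1-upward, y be 1-downward, both in L_k, with x₁ ≤ y₁ ≤ x₁ + 1, y₂ < x₂, and x₃ ≤ y₃. If F(x)₂ = x₂, then LUB(x,y) = (y₁, x₂, y₃) is an upward point of F. -/
/-- Third configuration, special case F(x)₂ = x₂: LUB(x,y) = (y₁, x₂, y₃) is
an upward point. -/
theorem third_config_eq_case (n : Fin 3 → ℤ) (k : ℤ)
    (F : (Fin 3 → ℤ) → (Fin 3 → ℤ))
    (hmaps : ∀ z, inGrid n z → inGrid n (F z))
    (hmono : ∀ z w, inGrid n z → inGrid n w → z ≤ w → F z ≤ F w)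
    (x y : Fin 3 → ℤ) (hx : inGrid n x) (hy : inGrid n y)
    (hxk : x 0 + x 1 + x 2 = k) (hyk : y 0 + y 1 + y 2 = k)
    (hxup : iUpward F x 0) (hydown : iDownward F y 0)
    (h01 : x 0 ≤ y 0) (h02 : y 0 ≤ x 0 + 1)
    (h1 : y 1 < x 1) (h2 : x 2 ≤ y 2)
    (heq : F x 1 = x 1) :
    ![y 0, x 1, y 2] ≤ F ![y 0, x 1, y 2] := by
  set w : Fin 3 → ℤ := ![y 0, x 1, y 2] with hw
  have hwg : inGrid n w := by
    intro i
    fin_cases i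
    · simpa [hw] using hy 0
    · simpa [hw] using hx 1
    · simpa [hw] using hy 2
  have hxw : x ≤ w := by
    intro i; fin_cases i <;> simp [hw] <;> linarith
  have hyw : y ≤ w := by
    intro i; fin_cases i <;> simp [hw] <;> linarith
  have hFxw : F x ≤ F w := hmono x w hx hwg hxw
  have hFyw : F y ≤ F w := hmono y w hy hwg hyw
  intro i
  fin_cases i
  · have := hxup.1
    have := hFxw 0
    simp [hw] at *
    linarith
  · have := hFxw 1
    simp [hw] at *
    linarith
  · have := hydown.2 2 (by decide)
    have := hFyw 2
    simp [hw] at *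
    linarith
end

section
/- Let F be monotone on a 3D grid, let x be 1-upward and y be 1-downward, both in L_k, with x₁ ≤ y₁ ≤ x₁ + 1, y₂ < x₂, x₃ ≤ y₃. Let q ∈ L_k with q₁ = y₁ and y₂ ≤ q₂ < x₂. If F(q)₁ ≥ q₁ and F(q)₂ ≥ q₂, then (q₁, q₂, y₃ + (y₂ − q₂)) — the point LUB(q, y) — satisfies F(LUB(q,y)) ≥ LUB(q,y); if instead F(q)₁ < q₁ and F(q)₂ ≤ q₂, then GLB(x, q) satisfies F(GLB(x,q)) ≤ GLB(x,q). -/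
/-- In a third configuration, a query point q with q₁ = y₁ and y₂ ≤ q₂ < x₂:
if F(q)₁ ≥ q₁ and F(q)₂ ≥ q₂ then LUB(q,y) is upward; if F(q)₁ < q₁ and
F(q)₂ ≤ q₂ then GLB(x,q) is downward. -/
theorem third_config_query (n : Fin 3 → ℤ) (k : ℤ)
    (F : (Fin 3 → ℤ) → (Fin 3 → ℤ))
    (hmaps : ∀ z, inGrid n z → inGrid n (F z))
    (hmono : ∀ z w, inGrid n z → inGrid n w → z ≤ w → F z ≤ F w)
    (x y q : Fin 3 → ℤ) (hx : inGrid n x) (hy : inGrid n y) (hq : inGrid n q)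
    (hxk : x 0 + x 1 + x 2 = k) (hyk : y 0 + y 1 + y 2 = k)
    (hqk : q 0 + q 1 + q 2 = k)
    (hxup : iUpward F x 0) (hydown : iDownward F y 0)
    (h01 : x 0 ≤ y 0) (h02 : y 0 ≤ x 0 + 1)
    (h1 : y 1 < x 1) (h2 : x 2 ≤ y 2)
    (hq0 : q 0 = y 0) (hq1 : y 1 ≤ q 1) (hq2 : q 1 < x 1) :
    ((q 0 ≤ F q 0 ∧ q 1 ≤ F q 1) →
      (fun m => max (q m) (y m)) ≤ F (fun m => max (q m) (y m))) ∧
    ((F q 0 < q 0 ∧ F q 1 ≤ q 1) →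
      F (fun m => min (x m) (q m)) ≤ (fun m => min (x m) (q m))) := by

  obtain ⟨hxup1, hxup2⟩ := hxup
  obtain ⟨hyd1, hyd2⟩ := hydown
  have hqy2 : q 2 ≤ y 2 := by omega
  have hxq2 : x 2 ≤ q 2 := by omega
  set w : Fin 3 → ℤ := fun m => max (q m) (y m) with hw
  set v : Fin 3 → ℤ := fun m => min (x m) (q m) with hv
  have hwg : inGrid n w := fun i => ⟨le_max_of_le_left (hq i).1, max_le (hq i).2 (hy i).2⟩
  have hvg : inGrid n v := fun i => ⟨le_min (hx i).1 (hq i).1, min_le_of_left_le (hx i).2⟩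
  have hqw : q ≤ w := fun i => le_max_left _ _
  have hyw : y ≤ w := fun i => le_max_right _ _
  have hvx : v ≤ x := fun i => min_le_left _ _
  have hvq : v ≤ q := fun i => min_le_right _ _
  constructor
  · rintro ⟨hF0, hF1⟩
    have hmq := hmono q w hq hwg hqw
    have hmy := hmono y w hy hwg hyw
    intro i
    fin_cases i
    · calc w 0 = q 0 := max_eq_left (by omega)
        _ ≤ F q 0 := hF0
        _ ≤ F w 0 := hmq 0
    · calc w 1 = q 1 := max_eq_left hq1
        _ ≤ F q 1 := hF1
        _ ≤ F w 1 := hmq 1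
    · calc w 2 = y 2 := max_eq_right hqy2
        _ ≤ F y 2 := hyd2 2 (by decide)
        _ ≤ F w 2 := hmy 2
  · rintro ⟨hF0, hF1⟩
    have hmq := hmono v q hvg hq hvq
    have hmx := hmono v x hvg hx hvx
    intro i
    fin_cases i
    · calc F v 0 ≤ F q 0 := hmq 0
        _ ≤ x 0 := by omega
        _ = v 0 := (min_eq_left (by omega)).symm
    · calc F v 1 ≤ F q 1 := hmq 1
        _ ≤ q 1 := hF1
        _ = v 1 := (min_eq_right (le_of_lt hq2)).symm
    · calc F v 2 ≤ F x 2 := hmx 2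
        _ ≤ x 2 := hxup2 2 (by decide)
        _ = v 2 := (min_eq_left hxq2).symm
end

section
/- Let F be monotone on a 3D grid, and let ℓ, r ∈ L_k with ℓ₁ = r₁, r₂ = ℓ₂ + 1, ℓ₃ = r₃ + 1, F(ℓ)₁ ≤ ℓ₁, F(r)₁ ≤ r₁, F(ℓ)₂ ≥ ℓ₂, F(ℓ)₃ < ℓ₃, F(r)₂ < r₂, F(r)₃ ≥ r₃. Then either GLB(ℓ,r) = (ℓ₁, ℓ₂, r₃) is a downward point of F or LUB(ℓ,r) = (ℓ₁, r₂, ℓ₃) is an upward point of F. -/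
/-- Adjacent binary-search endpoints: either GLB(ℓ,r) is downward or
LUB(ℓ,r) is upward. -/
theorem third_config_endgame (n : Fin 3 → ℤ) (k : ℤ)
    (F : (Fin 3 → ℤ) → (Fin 3 → ℤ))
    (hmaps : ∀ z, inGrid n z → inGrid n (F z))
    (hmono : ∀ z w, inGrid n z → inGrid n w → z ≤ w → F z ≤ F w)
    (l r : Fin 3 → ℤ) (hl : inGrid n l) (hr : inGrid n r)
    (hlk : l 0 + l 1 + l 2 = k) (hrk : r 0 + r 1 + r 2 = k)
    (h0 : l 0 = r 0) (h1 : r 1 = l 1 + 1) (h2 : l 2 = r 2 + 1)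
    (hFl0 : F l 0 ≤ l 0) (hFr0 : F r 0 ≤ r 0)
    (hFl1 : l 1 ≤ F l 1) (hFl2 : F l 2 < l 2)
    (hFr1 : F r 1 < r 1) (hFr2 : r 2 ≤ F r 2) :
    F ![l 0, l 1, r 2] ≤ ![l 0, l 1, r 2] ∨
      ![l 0, r 1, l 2] ≤ F ![l 0, r 1, l 2] := by
  left
  set g : Fin 3 → ℤ := ![l 0, l 1, r 2] with hg
  have hggrid : inGrid n g := by
    intro i
    fin_cases i <;> simp [hg]
    · exact hl 0
    · exact hl 1
    · exact hr 2
  have hgl : g ≤ l := by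
    intro i
    fin_cases i <;> simp [hg] <;> omega
  have hgr : g ≤ r := by
    intro i
    fin_cases i <;> simp [hg] <;> omega
  have hFgl := hmono g l hggrid hl hgl
  have hFgr := hmono g r hggrid hr hgr
  intro i
  fin_cases i <;> simp [hg]
  · exact le_trans (hFgl 0) hFl0
  · have := hFgr 1; simp [hg] at this; omega
  · have := hFgl 2; simp [hg] at this; omega
end

section
/- Let F be monotone on a 3D grid and let ℓ, r ∈ L_k with ℓ₁ = r₁, ℓ₂ ≤ r₂ ≤ ℓ₂ + 1, r₃ ≤ ℓ₃ ≤ r₃ + 1, F(ℓ)₃ < ℓ₃, and F(r)₂ < r₂. Then GLB(ℓ, r) is a downward point of F. -/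
/-- Binary-search endgame in the initialization: GLB(ℓ,r) is a downward
point. -/
theorem init_endgame (n : Fin 3 → ℤ) (k : ℤ)
    (F : (Fin 3 → ℤ) → (Fin 3 → ℤ))
    (hmaps : ∀ z, inGrid n z → inGrid n (F z))
    (hmono : ∀ z w, inGrid n z → inGrid n w → z ≤ w → F z ≤ F w)
    (l r : Fin 3 → ℤ) (hl : inGrid n l) (hr : inGrid n r)
    (hlk : l 0 + l 1 + l 2 = k) (hrk : r 0 + r 1 + r 2 = k)
    (h0 : l 0 = r 0)
    (h1a : l 1 ≤ r 1) (h1b : r 1 ≤ l 1 + 1)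
    (h2a : r 2 ≤ l 2) (h2b : l 2 ≤ r 2 + 1)
    (hFl2 : F l 2 < l 2) (hFr1 : F r 1 < r 1)
    (hF0 : F l 0 ≤ l 0 ∨ F r 0 ≤ r 0) :
    F (fun m => min (l m) (r m)) ≤ (fun m => min (l m) (r m)) := by
  set g : Fin 3 → ℤ := fun m => min (l m) (r m) with hg
  have hgl : g ≤ l := fun m => min_le_left _ _
  have hgr : g ≤ r := fun m => min_le_right _ _
  have hgG : inGrid n g := by
    intro i
    exact ⟨le_min (hl i).1 (hr i).1, le_trans (min_le_left _ _) (hl i).2⟩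
  have hFgl : F g ≤ F l := hmono g l hgG hl hgl
  have hFgr : F g ≤ F r := hmono g r hgG hr hgr
  intro m
  have h1 : F g 1 ≤ F r 1 := hFgr 1
  have h2 : F g 2 ≤ F l 2 := hFgl 2
  fin_cases m
  · show F g 0 ≤ min (l 0) (r 0)
    rcases hF0 with h | h
    · exact le_min (le_trans (hFgl 0) h) (le_trans (le_trans (hFgl 0) h) h0.le)
    · exact le_min (le_trans (le_trans (hFgr 0) h) h0.ge) (le_trans (hFgr 0) h)
  · show F g 1 ≤ min (l 1) (r 1)
    exact le_min (by omega) (by omega)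
  · show F g 2 ≤ min (l 2) (r 2)
    exact le_min (by omega) (by omega)
end

section
/- Let S be a nonempty subset of the levelset L_k of a 3D grid, of the form S = {x ∈ L_k : aᵢ ≤ xᵢ ≤ bᵢ for all i ∈ {1,2,3}}, and suppose diam(S)ᵢ := max_{x∈S} xᵢ − min_{x∈S} xᵢ satisfies diam(S)ᵢ > 1 for all i and max_i diam(S)ᵢ ≥ 6. Then there exists q ∈ S such that for every i ∈ {1,2,3}, both diam({x ∈ S : xᵢ ≤ qᵢ})ᵢ ≤ (5/6)·diam(S)ᵢ and diam({x ∈ S : xᵢ ≥ qᵢ})ᵢ ≤ (5/6)·diam(S)ᵢ. -/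
lemma fin3_cases (P : Fin 3 → Prop) (p0 : P 0) (p1 : P 1) (p2 : P 2) :
    ∀ i, P i := by
  intro i
  fin_cases i
  · exact p0
  · exact p1
  · exact p2

lemma core3 (d0 d1 d2 K : ℤ) (h0 : 2 ≤ d0) (h1 : 2 ≤ d1) (h2 : 2 ≤ d2)
    (hK0 : d0 ≤ K) (hK1 : d1 ≤ K) (hK2 : d2 ≤ K)
    (hK0' : K ≤ d1 + d2) (hK1' : K ≤ d0 + d2) (hK2' : K ≤ d0 + d1)
    (hbig : 6 ≤ d0 ∨ 6 ≤ d1 ∨ 6 ≤ d2) :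
    ∃ t0 t1 t2 : ℤ, t0 + t1 + t2 = K ∧
      d0 ≤ 6 * t0 ∧ 6 * t0 ≤ 5 * d0 ∧
      d1 ≤ 6 * t1 ∧ 6 * t1 ≤ 5 * d1 ∧
      d2 ≤ 6 * t2 ∧ 6 * t2 ≤ 5 * d2 := by
  obtain ⟨t0, ht0⟩ : ∃ t0 : ℤ,
      t0 = max ((d0+5)/6) (min ((5*d0)/6) (K - (d1+5)/6 - (d2+5)/6)) := ⟨_, rfl⟩
  obtain ⟨t1, ht1⟩ : ∃ t1 : ℤ,
      t1 = max ((d1+5)/6) (min ((5*d1)/6) (K - t0 - (d2+5)/6)) := ⟨_, rfl⟩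
  refine ⟨t0, t1, K - t0 - t1, ?_, ?_, ?_, ?_, ?_, ?_, ?_⟩ <;> omega

/-- Shrinking the remaining search space I: if every diameter exceeds 1 and
some diameter is at least 6, then there is a query point `q ∈ S` such that in
every coordinate, both halves determined by `q` have diameter at most 5/6 of
the original one (stated multiplied through by 6). -/
theorem shrink_search_space_I (n : Fin 3 → ℤ) (k : ℤ) (a b : Fin 3 → ℤ)
    (S : Set (Fin 3 → ℤ))
    (hS : S = {x | inGrid n x ∧ x 0 + x 1 + x 2 = k ∧ ∀ i, a i ≤ x i ∧ x i ≤ b i})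
    (hne : S.Nonempty)
    (l r : Fin 3 → ℤ)
    (hl : ∀ i, IsLeast ((fun x => x i) '' S) (l i))
    (hr : ∀ i, IsGreatest ((fun x => x i) '' S) (r i))
    (hdia : ∀ i, 1 < r i - l i)
    (hbig : ∃ i, 6 ≤ r i - l i) :
    ∃ q ∈ S, ∀ i,
      (∀ u ∈ S, ∀ v ∈ S, u i ≤ q i → v i ≤ q i →
        6 * |u i - v i| ≤ 5 * (r i - l i)) ∧
      (∀ u ∈ S, ∀ v ∈ S, q i ≤ u i → q i ≤ v i →
        6 * |u i - v i| ≤ 5 * (r i - l i)) := by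
  -- lower/upper bound properties
  have hlb : ∀ i, ∀ x ∈ S, l i ≤ x i := fun i x hx => (hl i).2 ⟨x, hx, rfl⟩
  have hub : ∀ i, ∀ x ∈ S, x i ≤ r i := fun i x hx => (hr i).2 ⟨x, hx, rfl⟩
  -- witnesses attaining the minima and maxima
  obtain ⟨u0, hu0S, hu0⟩ := (hl 0).1
  obtain ⟨u1, hu1S, hu1⟩ := (hl 1).1
  obtain ⟨u2, hu2S, hu2⟩ := (hl 2).1
  obtain ⟨w0, hw0S, hw0⟩ := (hr 0).1
  obtain ⟨w1, hw1S, hw1⟩ := (hr 1).1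
  obtain ⟨w2, hw2S, hw2⟩ := (hr 2).1
  have hu0' : u0 0 = l 0 := hu0
  have hu1' : u1 1 = l 1 := hu1
  have hu2' : u2 2 = l 2 := hu2
  have hw0' : w0 0 = r 0 := hw0
  have hw1' : w1 1 = r 1 := hw1
  have hw2' : w2 2 = r 2 := hw2
  clear hu0 hu1 hu2 hw0 hw1 hw2
  have memS : ∀ x ∈ S, inGrid n x ∧ x 0 + x 1 + x 2 = k ∧ ∀ i, a i ≤ x i ∧ x i ≤ b i := by
    intro x hx; rw [hS] at hx; exact hx
  -- bounds on K := k - (l 0 + l 1 + l 2)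
  have hK0 : r 0 - l 0 ≤ k - (l 0 + l 1 + l 2) := by
    have h := (memS w0 hw0S).2.1
    have := hlb 1 w0 hw0S; have := hlb 2 w0 hw0S; omega
  have hK1 : r 1 - l 1 ≤ k - (l 0 + l 1 + l 2) := by
    have h := (memS w1 hw1S).2.1
    have := hlb 0 w1 hw1S; have := hlb 2 w1 hw1S; omega
  have hK2 : r 2 - l 2 ≤ k - (l 0 + l 1 + l 2) := by
    have h := (memS w2 hw2S).2.1
    have := hlb 0 w2 hw2S; have := hlb 1 w2 hw2S; omega
  have hK0' : k - (l 0 + l 1 + l 2) ≤ (r 1 - l 1) + (r 2 - l 2) := by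
    have h := (memS u0 hu0S).2.1
    have := hub 1 u0 hu0S; have := hub 2 u0 hu0S; omega
  have hK1' : k - (l 0 + l 1 + l 2) ≤ (r 0 - l 0) + (r 2 - l 2) := by
    have h := (memS u1 hu1S).2.1
    have := hub 0 u1 hu1S; have := hub 2 u1 hu1S; omega
  have hK2' : k - (l 0 + l 1 + l 2) ≤ (r 0 - l 0) + (r 1 - l 1) := by
    have h := (memS u2 hu2S).2.1
    have := hub 0 u2 hu2S; have := hub 1 u2 hu2S; omega
  have hbig' : 6 ≤ r 0 - l 0 ∨ 6 ≤ r 1 - l 1 ∨ 6 ≤ r 2 - l 2 := by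
    obtain ⟨i, hi⟩ := hbig
    revert hi
    refine fin3_cases (fun i => 6 ≤ r i - l i → _) ?_ ?_ ?_ i <;> intro hi
    · exact Or.inl hi
    · exact Or.inr (Or.inl hi)
    · exact Or.inr (Or.inr hi)
  obtain ⟨t0, t1, t2, hsum, hd0, hd0', hd1, hd1', hd2, hd2'⟩ :=
    core3 (r 0 - l 0) (r 1 - l 1) (r 2 - l 2) (k - (l 0 + l 1 + l 2))
      (hdia 0) (hdia 1) (hdia 2) hK0 hK1 hK2 hK0' hK1' hK2' hbig'
  set q : Fin 3 → ℤ := ![l 0 + t0, l 1 + t1, l 2 + t2] with hq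
  have hq0 : q 0 = l 0 + t0 := rfl
  have hq1 : q 1 = l 1 + t1 := rfl
  have hq2 : q 2 = l 2 + t2 := rfl
  have key : ∀ i : Fin 3, l i ≤ q i ∧ q i ≤ r i ∧
      6 * (q i - l i) ≤ 5 * (r i - l i) ∧ 6 * (r i - q i) ≤ 5 * (r i - l i) := by
    refine fin3_cases _ ?_ ?_ ?_
    · rw [hq0]; omega
    · rw [hq1]; omega
    · rw [hq2]; omega
  have hqS : q ∈ S := by
    rw [hS]
    refine ⟨?_, ?_, ?_⟩
    · refine fin3_cases _ ?_ ?_ ?_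
      · have h1 := ((memS u0 hu0S).1 0).1
        have h2 := ((memS w0 hw0S).1 0).2
        have h3 := (key 0).1; have h4 := (key 0).2.1
        exact ⟨by omega, by omega⟩
      · have h1 := ((memS u1 hu1S).1 1).1
        have h2 := ((memS w1 hw1S).1 1).2
        have h3 := (key 1).1; have h4 := (key 1).2.1
        exact ⟨by omega, by omega⟩
      · have h1 := ((memS u2 hu2S).1 2).1
        have h2 := ((memS w2 hw2S).1 2).2
        have h3 := (key 2).1; have h4 := (key 2).2.1
        exact ⟨by omega, by omega⟩
    · rw [hq0, hq1, hq2]; omega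
    · refine fin3_cases _ ?_ ?_ ?_
      · have h1 := ((memS u0 hu0S).2.2 0).1
        have h2 := ((memS w0 hw0S).2.2 0).2
        have h3 := (key 0).1; have h4 := (key 0).2.1
        exact ⟨by omega, by omega⟩
      · have h1 := ((memS u1 hu1S).2.2 1).1
        have h2 := ((memS w1 hw1S).2.2 1).2
        have h3 := (key 1).1; have h4 := (key 1).2.1
        exact ⟨by omega, by omega⟩
      · have h1 := ((memS u2 hu2S).2.2 2).1
        have h2 := ((memS w2 hw2S).2.2 2).2
        have h3 := (key 2).1; have h4 := (key 2).2.1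
        exact ⟨by omega, by omega⟩
  refine ⟨q, hqS, ?_⟩
  intro i
  obtain ⟨k1, k2, k3, k4⟩ := key i
  constructor
  · intro u huS v hvS huq hvq
    have h1 := hlb i u huS; have h2 := hlb i v hvS
    rcases abs_cases (u i - v i) with ⟨h, _⟩ | ⟨h, _⟩ <;> omega
  · intro u huS v hvS huq hvq
    have h1 := hub i u huS; have h2 := hub i v hvS
    rcases abs_cases (u i - v i) with ⟨h, _⟩ | ⟨h, _⟩ <;> omega
end

section
/- Let S ⊆ L_k be of the form {x ∈ L_k : aᵢ ≤ xᵢ ≤ bᵢ for all i}, nonempty, with ℓᵢ = min_{x∈S} xᵢ and rᵢ = max_{x∈S} xᵢ. If there is no q ∈ S with ℓᵢ < qᵢ < rᵢ for all i ∈ {1,2,3}, and rᵢ ≥ ℓᵢ + 2 for all i, then either ℓ₁ + ℓ₂ + ℓ₃ = k − 2 or r₁ + r₂ + r₃ = k + 2. -/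
/-- If no point of `S` is strictly interior in every coordinate and every
coordinate range has length at least 2, then `ℓ₁+ℓ₂+ℓ₃ = k − 2` or
`r₁+r₂+r₃ = k + 2`. -/
theorem no_interior_point (n : Fin 3 → ℤ) (k : ℤ) (a b : Fin 3 → ℤ)
    (S : Set (Fin 3 → ℤ))
    (hS : S = {x | inGrid n x ∧ x 0 + x 1 + x 2 = k ∧ ∀ i, a i ≤ x i ∧ x i ≤ b i})
    (hne : S.Nonempty)
    (l r : Fin 3 → ℤ)
    (hl : ∀ i, IsLeast ((fun x => x i) '' S) (l i))
    (hr : ∀ i, IsGreatest ((fun x => x i) '' S) (r i))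
    (hnoq : ¬ ∃ q ∈ S, ∀ i, l i < q i ∧ q i < r i)
    (hgap : ∀ i, l i + 2 ≤ r i) :
    l 0 + l 1 + l 2 = k - 2 ∨ r 0 + r 1 + r 2 = k + 2 := by
  by_contra hcon
  push_neg at hcon
  obtain ⟨h1, h2⟩ := hcon
  have hmeml : ∀ i, ∀ x ∈ S, l i ≤ x i := fun i x hx => (hl i).2 ⟨x, hx, rfl⟩
  have hmemr : ∀ i, ∀ x ∈ S, x i ≤ r i := fun i x hx => (hr i).2 ⟨x, hx, rfl⟩
  have hlprop : ∀ i, 1 ≤ l i ∧ a i ≤ l i := by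
    intro i
    obtain ⟨x, hx, hxi⟩ := (hl i).1
    rw [hS] at hx
    obtain ⟨hg, -, hab⟩ := hx
    exact ⟨hxi ▸ (hg i).1, hxi ▸ (hab i).1⟩
  have hrprop : ∀ i, r i ≤ n i ∧ r i ≤ b i := by
    intro i
    obtain ⟨x, hx, hxi⟩ := (hr i).1
    rw [hS] at hx
    obtain ⟨hg, -, hab⟩ := hx
    exact ⟨hxi ▸ (hg i).2, hxi ▸ (hab i).2⟩
  -- Σl ≤ k - 3
  have hsl : l 0 + l 1 + l 2 ≤ k - 3 := by
    obtain ⟨x, hx, hxi⟩ := (hr 0).1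
    have h01 := hmeml 1 x hx
    have h02 := hmeml 2 x hx
    have hsum : x 0 + x 1 + x 2 = k := by rw [hS] at hx; exact hx.2.1
    have hxi2 : x 0 = r 0 := hxi
    have hg0 := hgap 0
    clear hx hxi
    omega
  have hsr : k + 3 ≤ r 0 + r 1 + r 2 := by
    obtain ⟨x, hx, hxi⟩ := (hl 0).1
    have h01 := hmemr 1 x hx
    have h02 := hmemr 2 x hx
    have hsum : x 0 + x 1 + x 2 = k := by rw [hS] at hx; exact hx.2.1
    have hxi2 : x 0 = l 0 := hxi
    have hg0 := hgap 0
    clear hx hxi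
    omega
  have hg0 := hgap 0
  have hg1 := hgap 1
  have hg2 := hgap 2
  set q0 : ℤ := min (r 0 - 1) (k - l 1 - l 2 - 2) with hq0
  have A : q0 ≤ r 0 - 1 := min_le_left _ _
  have B : q0 ≤ k - l 1 - l 2 - 2 := min_le_right _ _
  have C : k - r 1 - r 2 + 2 ≤ q0 := le_min (by omega) (by omega)
  have D : l 0 + 1 ≤ q0 := le_min (by omega) (by omega)
  set q1 : ℤ := min (r 1 - 1) (k - q0 - l 2 - 1) with hq1
  have E : q1 ≤ r 1 - 1 := min_le_left _ _
  have F : q1 ≤ k - q0 - l 2 - 1 := min_le_right _ _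
  have G : k - q0 - r 2 + 1 ≤ q1 := le_min (by omega) (by omega)
  have H : l 1 + 1 ≤ q1 := le_min (by omega) (by omega)
  set q2 : ℤ := k - q0 - q1 with hq2
  have hl0 := hlprop 0
  have hl1 := hlprop 1
  have hl2 := hlprop 2
  have hr0 := hrprop 0
  have hr1 := hrprop 1
  have hr2 := hrprop 2
  apply hnoq
  refine ⟨![q0, q1, q2], ?_, ?_⟩
  · rw [hS]
    refine ⟨fun i => ?_, by simp; ring, fun i => ?_⟩ <;>
      fin_cases i <;> simp <;> omega
  · intro i
    fin_cases i <;> simp <;> omega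
end

section
/- Let upᵢ, downᵢ ∈ L_k for i ∈ {1,2,3} be six points in the levelset of a 3D grid with (upᵢ)ᵢ ≤ (downᵢ)ᵢ for each i, such that upᵢ is i-upward and downᵢ is i-downward for F. Suppose the induced search space S = {x ∈ L_k : (upᵢ)ᵢ ≤ xᵢ ≤ (downᵢ)ᵢ for all i} is nonempty and has diam(S)ᵢ ≤ 1 for some i. Then among these six points there exist either (a) two points in first configuration, (b) three points in second configuration, or (c) a pair upᵢ, downᵢ with (upᵢ)ᵢ ≤ (downᵢ)ᵢ ≤ (upᵢ)ᵢ + 1 (third configuration). -/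
lemma exists_far_points (a b : Fin 3 → ℤ) (k : ℤ)
    (hab : ∀ j, a j + 2 ≤ b j)
    (hk1 : a 0 + a 1 + a 2 + 2 ≤ k) (hk2 : k ≤ b 0 + b 1 + b 2 - 2) (c : Fin 3) :
    ∃ u v : Fin 3 → ℤ, (∀ j, a j ≤ u j ∧ u j ≤ b j) ∧ (∀ j, a j ≤ v j ∧ v j ≤ b j) ∧
      u 0 + u 1 + u 2 = k ∧ v 0 + v 1 + v 2 = k ∧ v c + 2 ≤ u c := by
  have h0 := hab 0; have h1 := hab 1; have h2 := hab 2
  fin_cases c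
  · refine ⟨![max (a 0) (k - b 1 - b 2) + 2,
        min (b 1) (k - (max (a 0) (k - b 1 - b 2) + 2) - a 2),
        k - (max (a 0) (k - b 1 - b 2) + 2) -
          min (b 1) (k - (max (a 0) (k - b 1 - b 2) + 2) - a 2)],
      ![max (a 0) (k - b 1 - b 2),
        min (b 1) (k - max (a 0) (k - b 1 - b 2) - a 2),
        k - max (a 0) (k - b 1 - b 2) -
          min (b 1) (k - max (a 0) (k - b 1 - b 2) - a 2)], ?_, ?_, ?_, ?_, ?_⟩ <;>
      first
        | (intro j; fin_cases j <;> simp <;> omega)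
        | (simp <;> omega)
  · refine ⟨![min (b 0) (k - (max (a 1) (k - b 0 - b 2) + 2) - a 2),
        max (a 1) (k - b 0 - b 2) + 2,
        k - (max (a 1) (k - b 0 - b 2) + 2) -
          min (b 0) (k - (max (a 1) (k - b 0 - b 2) + 2) - a 2)],
      ![min (b 0) (k - max (a 1) (k - b 0 - b 2) - a 2),
        max (a 1) (k - b 0 - b 2),
        k - max (a 1) (k - b 0 - b 2) -
          min (b 0) (k - max (a 1) (k - b 0 - b 2) - a 2)], ?_, ?_, ?_, ?_, ?_⟩ <;>
      first
        | (intro j; fin_cases j <;> simp <;> omega)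
        | (simp <;> omega)
  · refine ⟨![min (b 0) (k - (max (a 2) (k - b 0 - b 1) + 2) - a 1),
        k - (max (a 2) (k - b 0 - b 1) + 2) -
          min (b 0) (k - (max (a 2) (k - b 0 - b 1) + 2) - a 1),
        max (a 2) (k - b 0 - b 1) + 2],
      ![min (b 0) (k - max (a 2) (k - b 0 - b 1) - a 1),
        k - max (a 2) (k - b 0 - b 1) -
          min (b 0) (k - max (a 2) (k - b 0 - b 1) - a 1),
        max (a 2) (k - b 0 - b 1)], ?_, ?_, ?_, ?_, ?_⟩ <;>
      first
        | (intro j; fin_cases j <;> simp <;> omega)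
        | (simp <;> omega)

/-- Two points are in first configuration. -/
def FirstConfig (F : (Fin 3 → ℤ) → (Fin 3 → ℤ)) (x y : Fin 3 → ℤ) : Prop :=
  ∃ i j, i ≠ j ∧
    ((iUpward F x i ∧ iUpward F y j ∧ y i ≤ x i ∧ x j ≤ y j) ∨
     (iDownward F x i ∧ iDownward F y j ∧ x i ≤ y i ∧ y j ≤ x j))

/-- Three points are in second configuration. -/
def SecondConfig (F : (Fin 3 → ℤ) → (Fin 3 → ℤ)) (x y z : Fin 3 → ℤ) : Prop :=
  ∃ i j p, i ≠ j ∧ j ≠ p ∧ i ≠ p ∧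
    ((iUpward F x i ∧ iUpward F y j ∧ iUpward F z p ∧
        y i ≤ x i ∧ z j ≤ y j ∧ x p ≤ z p) ∨
     (iDownward F x i ∧ iDownward F y j ∧ iDownward F z p ∧
        x i ≤ y i ∧ y j ≤ z j ∧ z p ≤ x p))

/-- Small diameter implies one of the three configurations among the six
bounding points. -/
theorem small_diameter_implies_configuration (n : Fin 3 → ℤ) (k : ℤ)
    (F : (Fin 3 → ℤ) → (Fin 3 → ℤ))
    (hmaps : ∀ z, inGrid n z → inGrid n (F z))
    (up down : Fin 3 → (Fin 3 → ℤ))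
    (hupG : ∀ i, inGrid n (up i)) (hdownG : ∀ i, inGrid n (down i))
    (hupk : ∀ i, up i 0 + up i 1 + up i 2 = k)
    (hdownk : ∀ i, down i 0 + down i 1 + down i 2 = k)
    (hup : ∀ i, iUpward F (up i) i) (hdown : ∀ i, iDownward F (down i) i)
    (hord : ∀ i, up i i ≤ down i i)
    (S : Set (Fin 3 → ℤ))
    (hS : S = {x | inGrid n x ∧ x 0 + x 1 + x 2 = k ∧
      ∀ i, up i i ≤ x i ∧ x i ≤ down i i})
    (hne : S.Nonempty)
    (hdia : ∃ i, ∀ u ∈ S, ∀ v ∈ S, |u i - v i| ≤ 1) :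
    (∃ x ∈ {p | ∃ i, p = up i ∨ p = down i}, ∃ y ∈ {p | ∃ i, p = up i ∨ p = down i},
        FirstConfig F x y) ∨
    (∃ x ∈ {p | ∃ i, p = up i ∨ p = down i}, ∃ y ∈ {p | ∃ i, p = up i ∨ p = down i},
        ∃ z ∈ {p | ∃ i, p = up i ∨ p = down i}, SecondConfig F x y z) ∨
    (∃ i, up i i ≤ down i i ∧ down i i ≤ up i i + 1) := by
  by_contra hcon
  push_neg at hcon
  obtain ⟨h1, h2, h3⟩ := hcon
  have memu : ∀ i : Fin 3, up i ∈ {p | ∃ i, p = up i ∨ p = down i} :=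
    fun i => ⟨i, Or.inl rfl⟩
  have memd : ∀ i : Fin 3, down i ∈ {p | ∃ i, p = up i ∨ p = down i} :=
    fun i => ⟨i, Or.inr rfl⟩
  have nFCu : ∀ i j : Fin 3, i ≠ j → ¬(up j i ≤ up i i ∧ up i j ≤ up j j) := by
    intro i j hij ⟨c1, c2⟩
    exact h1 (up i) (memu i) (up j) (memu j) ⟨i, j, hij, Or.inl ⟨hup i, hup j, c1, c2⟩⟩
  have nFCd : ∀ i j : Fin 3, i ≠ j → ¬(down i i ≤ down j i ∧ down j j ≤ down i j) := by
    intro i j hij ⟨c1, c2⟩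
    exact h1 (down i) (memd i) (down j) (memd j) ⟨i, j, hij, Or.inr ⟨hdown i, hdown j, c1, c2⟩⟩
  have nSCu1 : ¬(up 1 0 ≤ up 0 0 ∧ up 2 1 ≤ up 1 1 ∧ up 0 2 ≤ up 2 2) := by
    intro ⟨c1, c2, c3⟩
    exact h2 (up 0) (memu 0) (up 1) (memu 1) (up 2) (memu 2)
      ⟨0, 1, 2, by decide, by decide, by decide,
        Or.inl ⟨hup 0, hup 1, hup 2, c1, c2, c3⟩⟩
  have nSCu2 : ¬(up 2 0 ≤ up 0 0 ∧ up 1 2 ≤ up 2 2 ∧ up 0 1 ≤ up 1 1) := by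
    intro ⟨c1, c2, c3⟩
    exact h2 (up 0) (memu 0) (up 2) (memu 2) (up 1) (memu 1)
      ⟨0, 2, 1, by decide, by decide, by decide,
        Or.inl ⟨hup 0, hup 2, hup 1, c1, c2, c3⟩⟩
  have nSCd1 : ¬(down 0 0 ≤ down 1 0 ∧ down 1 1 ≤ down 2 1 ∧ down 2 2 ≤ down 0 2) := by
    intro ⟨c1, c2, c3⟩
    exact h2 (down 0) (memd 0) (down 1) (memd 1) (down 2) (memd 2)
      ⟨0, 1, 2, by decide, by decide, by decide,
        Or.inr ⟨hdown 0, hdown 1, hdown 2, c1, c2, c3⟩⟩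
  have nSCd2 : ¬(down 0 0 ≤ down 2 0 ∧ down 2 2 ≤ down 1 2 ∧ down 1 1 ≤ down 0 1) := by
    intro ⟨c1, c2, c3⟩
    exact h2 (down 0) (memd 0) (down 2) (memd 2) (down 1) (memd 1)
      ⟨0, 2, 1, by decide, by decide, by decide,
        Or.inr ⟨hdown 0, hdown 2, hdown 1, c1, c2, c3⟩⟩
  have hgap : ∀ i, up i i + 2 ≤ down i i := by
    intro i
    have := h3 i (hord i)
    omega
  have hk1 : up 0 0 + up 1 1 + up 2 2 + 2 ≤ k := by
    have e0 := hupk 0; have e1 := hupk 1; have e2 := hupk 2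
    have n01 := nFCu 0 1 (by decide); have n02 := nFCu 0 2 (by decide)
    have n12 := nFCu 1 2 (by decide)
    omega
  have hk2 : k ≤ down 0 0 + down 1 1 + down 2 2 - 2 := by
    have e0 := hdownk 0; have e1 := hdownk 1; have e2 := hdownk 2
    have n01 := nFCd 0 1 (by decide); have n02 := nFCd 0 2 (by decide)
    have n12 := nFCd 1 2 (by decide)
    omega
  obtain ⟨c, hc⟩ := hdia
  obtain ⟨u, v, hu, hv, hus, hvs, huv⟩ :=
    exists_far_points (fun i => up i i) (fun i => down i i) k hgap hk1 hk2 c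
  have hmemu : u ∈ S := by
    rw [hS]
    exact ⟨fun j => ⟨le_trans (hupG j j).1 (hu j).1, le_trans (hu j).2 (hdownG j j).2⟩,
      hus, fun j => hu j⟩
  have hmemv : v ∈ S := by
    rw [hS]
    exact ⟨fun j => ⟨le_trans (hupG j j).1 (hv j).1, le_trans (hv j).2 (hdownG j j).2⟩,
      hvs, fun j => hv j⟩
  have := hc u hmemu v hmemv
  rw [abs_le] at this
  omega
end
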